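/- (Principal-symbol asymptotics of the FIO amplitude in Proposition 4.1 b).) Let m ≥ 0 be a real number, k a natural number, and ρ : ℝ² \ {0} → ℂ smooth and homogeneous of degree 0 such that φ(τ) := ρ(1,τ) is compactly supported and φ^{(l)}(0) = 0 for all 0 ≤ l ≤ k-1. Then for every δ > 0 there exists a constant C such that for all ξ₁ > 0 and all s ∈ ℝ with |s| ≥ δ, | ∫_0^∞ e^{isξ₂} (ξ₁² + ξ₂²)^{m/2} ρ(ξ₁, ξ₂) dξ₂ − φ^{(k)}(0) · ξ₁^{m-k} / (-is)^{k+1} | ≤ C ξ₁^{m-k-1}. -/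

import Mathlib

/-!
Substituting `ξ₂ = ξ₁ τ` and using homogeneity turns the integral into
`ξ₁^(m+1) ∫_0^∞ e^{iλτ} g(τ) dτ` with `λ = s ξ₁` and `g(τ) = (1 + τ²)^(m/2) φ(τ)`, a smooth
compactly supported function with `g^{(j)}(0) = 0` for `j < k` and `g^{(k)}(0) = φ^{(k)}(0)` by
Leibniz. Integrating by parts `k + 2` times, the boundary terms at `0` give
`g^{(k)}(0)/(-iλ)^{k+1} + g^{(k+1)}(0)/(-iλ)^{k+2}` and the remaining integral is bounded by
`‖g^{(k+2)}‖₁/|λ|^{k+2}`. So the error is `O(ξ₁^(m+1) |λ|^{-(k+2)}) = O(ξ₁^(m-k-1))` uniformly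
in `|s| ≥ δ`; stopping after `k + 1` steps would only give `O(ξ₁^(m-k))`.
-/

open MeasureTheory Real Complex Set Filter Topology

section Leibniz

variable {𝕜 𝔸 : Type*} [NontriviallyNormedField 𝕜] [NormedRing 𝔸] [NormedAlgebra 𝕜 𝔸]
  {f g : 𝕜 → 𝔸} {x : 𝕜} {k n : ℕ}

theorem iteratedDeriv_fun_mul_eq_zero_of_lt (hg : ContDiffAt 𝕜 n g x) (hf : ContDiffAt 𝕜 n f x)
    (hvan : ∀ j < k, iteratedDeriv j f x = 0) (hn : n < k) :
    iteratedDeriv n (fun y => g y * f y) x = 0 := by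
  rw [iteratedDeriv_fun_mul hg hf]
  exact Finset.sum_eq_zero fun i _ => by rw [hvan (n - i) (by omega), mul_zero]

theorem iteratedDeriv_fun_mul_eq_of_forall_lt (hg : ContDiffAt 𝕜 k g x) (hf : ContDiffAt 𝕜 k f x)
    (hvan : ∀ j < k, iteratedDeriv j f x = 0) :
    iteratedDeriv k (fun y => g y * f y) x = g x * iteratedDeriv k f x := by
  rw [iteratedDeriv_fun_mul hg hf, Finset.sum_range_succ',
    Finset.sum_eq_zero fun i hi => by
      rw [hvan (k - (i + 1)) (by rw [Finset.mem_range] at hi; omega), mul_zero]]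
  simp

end Leibniz

theorem HasCompactSupport.iteratedDeriv {F : Type*} [NormedAddCommGroup F] [NormedSpace ℝ F]
    {h : ℝ → F} (hc : HasCompactSupport h) (n : ℕ) : HasCompactSupport (iteratedDeriv n h) := by
  induction n with
  | zero => simpa using hc
  | succ n ih => rw [iteratedDeriv_succ]; exact ih.deriv

section OscillatoryIntegral

variable {lam : ℝ} {h : ℝ → ℂ}

theorem hasDerivAt_exp_I_mul_mul (lam x : ℝ) :
    HasDerivAt (fun τ : ℝ => exp (I * lam * τ)) (I * lam * exp (I * lam * x)) x := by
  have := ((hasDerivAt_id (x : ℂ)).const_mul (I * lam)).cexp.comp_ofReal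
  simpa [mul_comm] using this

theorem integrableOn_exp_I_mul_mul (hh : Continuous h) (hc : HasCompactSupport h) (s : Set ℝ) :
    IntegrableOn (fun τ : ℝ => exp (I * lam * τ) * h τ) s :=
  ((by fun_prop : Continuous fun τ : ℝ => exp (I * lam * τ)).mul hh
    |>.integrable_of_hasCompactSupport hc.mul_left).integrableOn

theorem integral_Ioi_exp_I_mul_mul (hlam : lam ≠ 0) (hh : ContDiff ℝ 1 h)
    (hc : HasCompactSupport h) :
    ∫ τ in Ioi (0 : ℝ), exp (I * lam * τ) * h τ
      = (h 0 + ∫ τ in Ioi (0 : ℝ), exp (I * lam * τ) * deriv h τ) / (-(I * lam)) := by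
  have hne : I * (lam : ℂ) ≠ 0 := by simp [hlam]
  have hderiv (x : ℝ) : HasDerivAt (fun τ : ℝ => exp (I * lam * τ) * h τ)
      (I * lam * (exp (I * lam * x) * h x) + exp (I * lam * x) * deriv h x) x :=
    ((hasDerivAt_exp_I_mul_mul lam x).fun_mul
      ((hh.differentiable one_ne_zero) x).hasDerivAt).congr_deriv (by ring)
  have hlim : Tendsto (fun τ : ℝ => exp (I * lam * τ) * h τ) atTop (𝓝 0) :=
    (hc.mul_left.is_zero_at_infty).mono_left atTop_le_cocompact
  have hint := integrableOn_exp_I_mul_mul (lam := lam) hh.continuous hc (Ioi 0)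
  have hint' := integrableOn_exp_I_mul_mul (lam := lam)
    (hh.continuous_deriv le_rfl) hc.deriv (Ioi 0)
  have key := integral_Ioi_of_hasDerivAt_of_tendsto' (fun x _ => hderiv x)
    ((hint.const_mul (I * lam)).add hint') hlim
  rw [integral_add (hint.const_mul _) hint', integral_const_mul] at key
  rw [eq_div_iff (neg_ne_zero.mpr hne)]
  simp only [ofReal_zero, mul_zero, Complex.exp_zero, one_mul, zero_sub] at key
  linear_combination -key

theorem integral_Ioi_exp_I_mul_mul_eq_sum (hlam : lam ≠ 0) {n : ℕ} (hh : ContDiff ℝ n h)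
    (hc : HasCompactSupport h) :
    ∫ τ in Ioi (0 : ℝ), exp (I * lam * τ) * h τ
      = ∑ j ∈ Finset.range n, iteratedDeriv j h 0 / (-(I * lam)) ^ (j + 1)
        + (∫ τ in Ioi (0 : ℝ), exp (I * lam * τ) * iteratedDeriv n h τ) / (-(I * lam)) ^ n := by
  induction n with
  | zero => simp
  | succ n ih =>
    have hh1 : ContDiff ℝ 1 (iteratedDeriv n h) := by
      rw [iteratedDeriv_eq_iterate]
      exact (hh.of_le (m := (1 + n : ℕ)) (by simp [add_comm])).iterate_deriv' 1 n
    rw [ih (hh.of_le (by norm_cast; omega)),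
      integral_Ioi_exp_I_mul_mul hlam hh1 (hc.iteratedDeriv n), Finset.sum_range_succ,
      ← iteratedDeriv_succ, div_div, ← pow_succ', add_div, add_assoc]

theorem norm_integral_Ioi_exp_I_mul_mul_sub_le (hlam : lam ≠ 0) {k : ℕ}
    (hh : ContDiff ℝ (k + 2) h) (hc : HasCompactSupport h)
    (hvan : ∀ j < k, iteratedDeriv j h 0 = 0) :
    ‖(∫ τ in Ioi (0 : ℝ), exp (I * lam * τ) * h τ) - iteratedDeriv k h 0 / (-(I * lam)) ^ (k + 1)‖
      ≤ (‖iteratedDeriv (k + 1) h 0‖ + ∫ τ in Ioi (0 : ℝ), ‖iteratedDeriv (k + 2) h τ‖)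
          / |lam| ^ (k + 2) := by
  have hremainder : ‖∫ τ in Ioi (0 : ℝ), exp (I * lam * τ) * iteratedDeriv (k + 2) h τ‖
      ≤ ∫ τ in Ioi (0 : ℝ), ‖iteratedDeriv (k + 2) h τ‖ :=
    (norm_integral_le_integral_norm _).trans_eq <| by
      simp only [norm_mul, mul_assoc, ← ofReal_mul, norm_exp_I_mul_ofReal, one_mul]
  rw [integral_Ioi_exp_I_mul_mul_eq_sum hlam (by exact_mod_cast hh) hc, Finset.sum_range_succ,
    Finset.sum_range_succ, Finset.sum_eq_zero fun j hj => by
      rw [hvan j (Finset.mem_range.mp hj), zero_div], zero_add, add_assoc, add_sub_cancel_left,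
    ← add_div, norm_div, norm_pow, norm_neg, norm_mul, norm_I, one_mul, norm_real, Real.norm_eq_abs]
  gcongr
  exact (norm_add_le _ _).trans (by gcongr)

end OscillatoryIntegral

theorem integral_Ioi_of_homogeneous {ρ : ℝ × ℝ → ℂ}
    (hhom : ∀ r : ℝ, 0 < r → ∀ ξ : ℝ × ℝ, ξ ≠ 0 → ρ (r • ξ) = ρ ξ) (m s : ℝ) {ξ₁ : ℝ}
    (hξ₁ : 0 < ξ₁) :
    ∫ ξ₂ in Ioi (0 : ℝ), exp (I * s * ξ₂) * ((ξ₁ ^ 2 + ξ₂ ^ 2) ^ (m / 2) : ℝ) * ρ (ξ₁, ξ₂)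
      = ((ξ₁ ^ (m + 1) : ℝ) : ℂ) *
        ∫ τ in Ioi (0 : ℝ),
          exp (I * (s * ξ₁ : ℝ) * τ) * (((1 + τ ^ 2) ^ (m / 2) : ℝ) * ρ (1, τ)) := by
  have hweight (τ : ℝ) : (ξ₁ ^ 2 + (ξ₁ * τ) ^ 2) ^ (m / 2) = ξ₁ ^ m * (1 + τ ^ 2) ^ (m / 2) := by
    rw [show ξ₁ ^ 2 + (ξ₁ * τ) ^ 2 = ξ₁ ^ 2 * (1 + τ ^ 2) by ring,
      mul_rpow (by positivity) (by positivity), ← rpow_natCast, ← rpow_mul hξ₁.le]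
    norm_num [mul_div_cancel₀]
  have hρ (τ : ℝ) : ρ (ξ₁, ξ₁ * τ) = ρ (1, τ) := by
    simpa using hhom ξ₁ hξ₁ (1, τ) (by simp)
  have hcov := integral_comp_mul_left_Ioi
    (fun ξ₂ : ℝ => exp (I * s * ξ₂) * ((ξ₁ ^ 2 + ξ₂ ^ 2) ^ (m / 2) : ℝ) * ρ (ξ₁, ξ₂)) 0 hξ₁
  rw [mul_zero, eq_inv_smul_iff₀ hξ₁.ne'] at hcov
  rw [← hcov]
  simp only [hweight, hρ, rpow_add_one hξ₁.ne', real_smul, ← integral_const_mul]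
  push_cast
  congr 1
  ext τ
  ring_nf

theorem norm_rpow_mul_sub_le_of_rescaled {m A δ s x : ℝ} {k : ℕ} {z a : ℂ} (hδ : 0 < δ)
    (hs : δ ≤ |s|) (hx : 0 < x) (hA : 0 ≤ A)
    (hz : ‖z - a / (-(I * (s * x : ℝ))) ^ (k + 1)‖ ≤ A / |s * x| ^ (k + 2)) :
    ‖((x ^ (m + 1) : ℝ) : ℂ) * z - a * ((x ^ (m - k) : ℝ) : ℂ) / (-(I * s)) ^ (k + 1)‖
      ≤ A / δ ^ (k + 2) * x ^ (m - k - 1) := by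
  have hpow (j : ℕ) (e : ℝ) (he : e + j = m + 1) : x ^ (m + 1) = x ^ e * x ^ j := by
    rw [← rpow_natCast, ← rpow_add hx, he]
  have hsI : -(I * (s : ℂ)) ≠ 0 := by
    have : s ≠ 0 := by rintro rfl; rw [abs_zero] at hs; linarith
    simp [this]
  have hsplit : ((x ^ (m + 1) : ℝ) : ℂ) * z - a * ((x ^ (m - k) : ℝ) : ℂ) / (-(I * s)) ^ (k + 1)
      = ((x ^ (m + 1) : ℝ) : ℂ) * (z - a / (-(I * (s * x : ℝ))) ^ (k + 1)) := by
    have hxC : (x : ℂ) ≠ 0 := by exact_mod_cast hx.ne'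
    rw [hpow (k + 1) (m - k) (by push_cast; ring), ofReal_mul, ofReal_mul,
      show -(I * (s * x : ℂ)) = -(I * s) * x by ring, mul_pow]
    push_cast
    field_simp
  rw [hsplit, norm_mul, norm_real, Real.norm_of_nonneg (by positivity),
    hpow (k + 2) (m - k - 1) (by push_cast; ring)]
  calc x ^ (m - k - 1) * x ^ (k + 2) * ‖z - a / (-(I * (s * x : ℝ))) ^ (k + 1)‖
      ≤ x ^ (m - k - 1) * x ^ (k + 2) * (A / (δ * x) ^ (k + 2)) := by
        gcongr
        refine hz.trans (by gcongr; rw [abs_mul, abs_of_pos hx]; gcongr)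
    _ = A / δ ^ (k + 2) * x ^ (m - k - 1) := by
        field_simp
        ring

theorem stmt_11_general (m : ℝ) (k : ℕ) (ρ : ℝ × ℝ → ℂ)
    (hρ : ContDiffOn ℝ (⊤ : ℕ∞) ρ {ξ : ℝ × ℝ | ξ ≠ 0})
    (hhom : ∀ r : ℝ, 0 < r → ∀ ξ : ℝ × ℝ, ξ ≠ 0 → ρ (r • ξ) = ρ ξ)
    (φ : ℝ → ℂ) (hφ : φ = fun τ => ρ (1, τ))
    (hcs : HasCompactSupport φ)
    (hvan : ∀ l < k, iteratedDeriv l φ 0 = 0) :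
    ∀ δ : ℝ, 0 < δ → ∃ C : ℝ, ∀ ξ₁ : ℝ, 0 < ξ₁ → ∀ s : ℝ, δ ≤ |s| →
      ‖(∫ ξ₂ in Set.Ioi (0 : ℝ),
            Complex.exp (Complex.I * s * ξ₂) * ((ξ₁ ^ 2 + ξ₂ ^ 2) ^ (m / 2) : ℝ) * ρ (ξ₁, ξ₂))
          - iteratedDeriv k φ 0 * (ξ₁ ^ (m - k) : ℝ) / (-(Complex.I * s)) ^ (k + 1)‖
        ≤ C * (ξ₁ ^ (m - k - 1) : ℝ) := by
  intro δ hδ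
  have hφs : ContDiff ℝ (⊤ : ℕ∞) φ := contDiff_iff_contDiffAt.mpr fun τ => hφ ▸
    (hρ.contDiffAt (isOpen_ne.mem_nhds (by simp [Prod.ext_iff]))).comp τ
      (contDiffAt_const.prodMk contDiffAt_id)
  set g : ℝ → ℂ := fun τ => ((1 + τ ^ 2) ^ (m / 2) : ℝ) * φ τ
  have hws : ContDiff ℝ (⊤ : ℕ∞) fun τ : ℝ => (((1 + τ ^ 2) ^ (m / 2) : ℝ) : ℂ) :=
    ofRealCLM.contDiff.comp <| (contDiff_const.add (contDiff_id.pow 2)).rpow_const_of_ne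
      fun τ => by positivity
  have hgs : ContDiff ℝ (k + 2) g := (hws.mul hφs).of_le (by exact_mod_cast ENat.LEInfty.out)
  have hgk : iteratedDeriv k g 0 = iteratedDeriv k φ 0 := by
    simpa [g] using iteratedDeriv_fun_mul_eq_of_forall_lt (hws.of_le ENat.LEInfty.out).contDiffAt
      (hφs.of_le ENat.LEInfty.out).contDiffAt hvan
  refine ⟨(‖iteratedDeriv (k + 1) g 0‖ + ∫ τ in Ioi (0 : ℝ), ‖iteratedDeriv (k + 2) g τ‖)
    / δ ^ (k + 2), fun ξ₁ hξ₁ s hs => ?_⟩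
  have hsξ : s * ξ₁ ≠ 0 := mul_ne_zero (by rintro rfl; rw [abs_zero] at hs; linarith) hξ₁.ne'
  rw [integral_Ioi_of_homogeneous hhom m s hξ₁, ← hgk]
  refine norm_rpow_mul_sub_le_of_rescaled hδ hs hξ₁ (by positivity) ?_
  subst hφ
  exact norm_integral_Ioi_exp_I_mul_mul_sub_le hsξ hgs hcs.mul_left fun j hj =>
    iteratedDeriv_fun_mul_eq_zero_of_lt (hws.of_le ENat.LEInfty.out).contDiffAt
      (hφs.of_le ENat.LEInfty.out).contDiffAt hvan hj

/-- Principal-symbol asymptotics of the FIO amplitude: for `ρ` smooth on `ℝ² \ {0}`,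
homogeneous of degree `0`, `φ(τ) = ρ(1,τ)` compactly supported with `φ^{(l)}(0) = 0`
for `0 ≤ l ≤ k-1`, and every `δ > 0`, there is `C` such that for all `ξ₁ > 0` and
`|s| ≥ δ`, `|∫_0^∞ e^{isξ₂} (ξ₁²+ξ₂²)^{m/2} ρ(ξ₁,ξ₂) dξ₂ − φ^{(k)}(0) ξ₁^{m-k}/(-is)^{k+1}|
  ≤ C ξ₁^{m-k-1}`. -/
theorem stmt_11 (m : ℝ) (hm : 0 ≤ m) (k : ℕ) (ρ : ℝ × ℝ → ℂ)
    (hρ : ContDiffOn ℝ (⊤ : ℕ∞) ρ {ξ : ℝ × ℝ | ξ ≠ 0})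
    (hhom : ∀ r : ℝ, 0 < r → ∀ ξ : ℝ × ℝ, ξ ≠ 0 → ρ (r • ξ) = ρ ξ)
    (φ : ℝ → ℂ) (hφ : φ = fun τ => ρ (1, τ))
    (hcs : HasCompactSupport φ)
    (hvan : ∀ l < k, iteratedDeriv l φ 0 = 0) :
    ∀ δ : ℝ, 0 < δ → ∃ C : ℝ, ∀ ξ₁ : ℝ, 0 < ξ₁ → ∀ s : ℝ, δ ≤ |s| →
      ‖(∫ ξ₂ in Set.Ioi (0 : ℝ),
            Complex.exp (Complex.I * s * ξ₂) * ((ξ₁ ^ 2 + ξ₂ ^ 2) ^ (m / 2) : ℝ) * ρ (ξ₁, ξ₂))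
          - iteratedDeriv k φ 0 * (ξ₁ ^ (m - k) : ℝ) / (-(Complex.I * s)) ^ (k + 1)‖
        ≤ C * (ξ₁ ^ (m - k - 1) : ℝ) :=
  stmt_11_general m k ρ hρ hhom φ hφ hcs hvan
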